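/- Let c : ℕ → ℕ be computable with unbounded range, and let P : ℕ → ℚ be a computable pathway-probability bound that is jointly small along high-index objects. Then for all E, m : ℕ there exists y : ℕ such that C(y) + E < c(y) and (P(y) : ℝ) < 2^(-(C(y) + m)). (This is Corollary 2.5 of the paper: when the randomly generated computable generative processes of the assembly space are capable of universal computation, the complexity error of the assembly index exceeds any prescribed error E, and the frequency of occurrence of y diverges by a factor of at least 2^m from the pathway probability expected by Assembly Theory.) -/

import Mathlib

/-!
Searching for the least `y` with `x ≤ c y` and `P y * 2 ^ x < 1` is a total computable function
`f`, total because `P` is jointly small along high-index objects. Iterated self-pairing of `succ`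
gives codes of length `O(2 ^ j)` with output `n = 2 ^ 2 ^ j - 1`; composing one of them with a
code for `f` shows `C (f n) = O(2 ^ j)`, far below `n ≤ c (f n)`, while `P (f n) < 2 ^ (-n)`.

Computability of `P` refers to the `Denumerable` numbering of `ℚ`, which lists the range of the
numerator-denominator encoding in increasing order. That range is decidable (through `gcd`), so
the numbering can be decoded by search, and `q * 2 ^ n < 1` becomes a computable test.
-/

/-- The length of a program (code): number of binary digits of its encoding. -/
def codeLen (e : Nat.Partrec.Code) : ℕ := Nat.size (Encodable.encode e)

/-- A code `e` outputs `y` if evaluating it on input `0` yields `y`. -/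
def Outputs (e : Nat.Partrec.Code) (y : ℕ) : Prop := e.eval 0 = Part.some y

/-- Kolmogorov complexity of `y`: the least length of a code outputting `y`. -/
noncomputable def C (y : ℕ) : ℕ := sInf { n | ∃ e : Nat.Partrec.Code, Outputs e y ∧ codeLen e = n }

open Encodable Denumerable
open Nat.Partrec (Code)

theorem Denumerable.ofNat_int (n : ℕ) :
    ofNat ℤ n = bif n.bodd then Int.negSucc n.div2 else Int.ofNat n.div2 := by
  change Equiv.intEquivNat.symm n = _
  simp only [Equiv.intEquivNat, Equiv.symm_trans_apply, Equiv.natSumNatEquivNat_symm_apply]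
  cases n.bodd <;> rfl

namespace Primrec

theorem nat_pow : Primrec₂ ((· ^ ·) : ℕ → ℕ → ℕ) :=
  Primrec₂.unpaired'.1 Nat.Primrec.pow

theorem nat_dvd : PrimrecRel ((· ∣ ·) : ℕ → ℕ → Prop) :=
  (Primrec.eq.comp (nat_mod.comp snd fst) (const 0)).of_eq fun _ => Nat.dvd_iff_mod_eq_zero.symm

theorem nat_gcd : Primrec₂ Nat.gcd := by
  have hgcd (a b : ℕ) : Nat.gcd a b = Nat.findGreatest (fun d => d ∣ a ∧ d ∣ b) (a + b) := by
    refine (Nat.findGreatest_eq_iff.2 ⟨?_, fun _ => ⟨Nat.gcd_dvd_left a b, Nat.gcd_dvd_right a b⟩,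
      fun k hk _ hdvd => ?_⟩).symm
    · rcases Nat.eq_zero_or_pos a with rfl | ha
      · simp
      · exact (Nat.gcd_le_left b ha).trans (Nat.le_add_right a b)
    · have hpos : 0 < Nat.gcd a b := Nat.pos_of_ne_zero fun h => by
        simp only [Nat.gcd_eq_zero_iff] at h
        omega
      exact hk.not_ge (Nat.le_of_dvd hpos (Nat.dvd_gcd hdvd.1 hdvd.2))
  have hcommon : PrimrecRel fun (p : ℕ × ℕ) (d : ℕ) => d ∣ p.1 ∧ d ∣ p.2 :=
    (nat_dvd.comp snd (fst.comp fst)).and (nat_dvd.comp snd (snd.comp fst))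
  exact (nat_findGreatest (nat_add.comp fst snd) hcommon).to₂.of_eq fun a b => (hgcd a b).symm

theorem int_natAbs : Primrec Int.natAbs :=
  ofNat_iff.2 <| (cond nat_bodd (succ.comp nat_div2) nat_div2).of_eq fun n => by
    rw [Denumerable.ofNat_int]; cases n.bodd <;> rfl

theorem int_toNat : Primrec Int.toNat :=
  ofNat_iff.2 <| (cond nat_bodd (const 0) nat_div2).of_eq fun n => by
    rw [Denumerable.ofNat_int]; cases n.bodd <;> rfl

end Primrec

theorem ComputablePred.and {α : Type*} [Primcodable α] {p q : α → Prop}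
    (hp : ComputablePred p) (hq : ComputablePred q) : ComputablePred fun a => p a ∧ q a := by
  classical
  exact ((Primrec.and.to_comp.comp hp.decide hq.decide).of_eq fun a =>
    (Bool.decide_and (p a) (q a)).symm).computablePred

namespace Computable

theorem nat_count {p : ℕ → Prop} [DecidablePred p] (hp : ComputablePred p) :
    Computable (Nat.count p) := by
  have hstep : Computable₂ fun (_ : ℕ) (kc : ℕ × ℕ) => kc.2 + bif decide (p kc.1) then 1 else 0 :=
    (Primrec.nat_add.to_comp.comp (snd.comp snd)
      (cond (hp.decide.comp (fst.comp snd)) (const 1) (const 0))).to₂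
  refine (nat_rec .id (const 0) hstep).of_eq fun n => ?_
  induction n with
  | zero => rfl
  | succ n ih => simp only [Nat.count_succ, ← ih]; cases decide (p n) <;> simp_all

theorem nat_nth {p : ℕ → Prop} (hp : ComputablePred p) (hinf : (Set.ofPred p).Infinite) :
    Computable (Nat.nth p) := by
  classical
  have hnth (k : ℕ) : p (Nat.nth p k) ∧ Nat.count p (Nat.nth p k) = k :=
    ⟨Nat.nth_mem_of_infinite hinf k, Nat.count_nth_of_infinite hinf k⟩
  have hex (k : ℕ) : ∃ n, p n ∧ Nat.count p n = k := ⟨_, hnth k⟩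
  have htest : ComputablePred fun kn : ℕ × ℕ => p kn.2 ∧ Nat.count p kn.2 = kn.1 :=
    (hp.decide.comp snd).computablePred.and
      (Primrec.eq.decide.to_comp.comp ((nat_count hp).comp snd) fst).computablePred
  refine (find htest hex).of_eq fun k => (Nat.find_eq_iff (hex k)).2
    ⟨hnth k, fun n hn ⟨hpn, hcount⟩ => hn.ne ?_⟩
  rw [← hcount, Nat.nth_count hpn]

end Computable

namespace Rat

theorem encode_eq_pair (q : ℚ) : encode q = Nat.pair (encode q.num) q.den := rfl

/-- Here `encode` is `Rat.instEncodable` (numerator and denominator), whereas the `Primcodable ℚ`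
instance numbers `ℚ` through `Rat.instDenumerable`. -/
theorem pair_num_den_eq_nth (q : ℚ) :
    Nat.pair (encode q.num) q.den =
      Nat.nth (· ∈ Set.range (encode : ℚ → ℕ)) (@encode ℚ instDenumerable.toEncodable q) :=
  letI := decidableRangeEncode ℚ
  (Nat.nth_count (p := (· ∈ Set.range (encode : ℚ → ℕ))) ⟨q, rfl⟩).symm

theorem mem_range_encode_iff (n : ℕ) :
    n ∈ Set.range (encode : ℚ → ℕ) ↔
      0 < n.unpair.2 ∧ (ofNat ℤ n.unpair.1).natAbs.Coprime n.unpair.2 := by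
  constructor
  · rintro ⟨q, rfl⟩
    rw [encode_eq_pair, Nat.unpair_pair, ofNat_encode]
    exact ⟨q.den_pos, q.reduced⟩
  · rintro ⟨hpos, hcop⟩
    refine ⟨⟨ofNat ℤ n.unpair.1, n.unpair.2, hpos.ne', hcop⟩, ?_⟩
    rw [encode_eq_pair]
    exact (congrArg₂ Nat.pair (encode_ofNat (α := ℤ) _) rfl).trans (Nat.pair_unpair n)

theorem computablePred_mem_range_encode : ComputablePred (· ∈ Set.range (encode : ℚ → ℕ)) := by
  have hcoprime : PrimrecRel Nat.Coprime :=
    (Primrec.eq.comp Primrec.nat_gcd (Primrec.const 1)).of_eq fun _ => Iff.rfl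
  have hunpair₁ := Primrec.fst.comp Primrec.unpair
  have hunpair₂ := Primrec.snd.comp Primrec.unpair
  exact ((Primrec.nat_lt.comp (Primrec.const 0) hunpair₂).and
    (hcoprime.comp (Primrec.int_natAbs.comp ((Primrec.ofNat ℤ).comp hunpair₁)) hunpair₂)
    ).computablePred.of_eq fun n => (mem_range_encode_iff n).symm

theorem infinite_range_encode : (Set.range (encode : ℚ → ℕ)).Infinite :=
  Set.infinite_range_of_injective encode_injective

theorem computable_pair_num_den : Computable fun q : ℚ => Nat.pair (encode q.num) q.den :=
  ((Computable.nat_nth computablePred_mem_range_encode infinite_range_encode).comp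
    Computable.encode).of_eq fun q => (pair_num_den_eq_nth q).symm

theorem computable_num : Computable Rat.num :=
  ((Computable.ofNat ℤ).comp ((Primrec.fst.comp Primrec.unpair).to_comp.comp
    computable_pair_num_den)).of_eq fun q => by rw [Nat.unpair_pair, ofNat_encode]

theorem computable_den : Computable Rat.den :=
  ((Primrec.snd.comp Primrec.unpair).to_comp.comp computable_pair_num_den).of_eq fun q => by simp

theorem mul_two_pow_lt_one_iff (q : ℚ) (n : ℕ) : q * 2 ^ n < 1 ↔ q.num.toNat * 2 ^ n < q.den := by
  have hden : (0 : ℚ) < q.den := by exact_mod_cast q.den_pos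
  have hnum : q * 2 ^ n < 1 ↔ q.num * 2 ^ n < (q.den : ℤ) := by
    rw [← mul_lt_mul_iff_left₀ hden, one_mul, mul_right_comm, Rat.mul_den_eq_num]
    exact_mod_cast Iff.rfl
  rw [hnum]
  rcases le_or_gt 0 q.num with h | h
  · rw [← Int.toNat_of_nonneg h]
    exact_mod_cast Iff.rfl
  · have : q.num * 2 ^ n < 0 := mul_neg_of_neg_of_pos h (by positivity)
    simp only [Int.toNat_of_nonpos h.le, zero_mul, q.den_pos, iff_true]
    omega

theorem computablePred_mul_two_pow_lt_one : ComputablePred fun p : ℚ × ℕ => p.1 * 2 ^ p.2 < 1 :=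
  (Primrec.nat_lt.decide.to_comp.comp
    (Primrec.nat_mul.to_comp.comp (Primrec.int_toNat.to_comp.comp (computable_num.comp .fst))
      (Primrec.nat_pow.to_comp.comp (.const 2) .snd))
    (computable_den.comp .fst)).computablePred.of_eq fun p => (mul_two_pow_lt_one_iff p.1 p.2).symm

theorem cast_lt_two_zpow_neg_of_mul_two_pow_lt_one {q : ℚ} {k n : ℕ} (h : q * 2 ^ n < 1)
    (hk : k ≤ n) : (q : ℝ) < 2 ^ (-(k : ℤ)) :=
  calc (q : ℝ) < 1 / 2 ^ n := (lt_div_iff₀ (by positivity)).2 (by exact_mod_cast h)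
    _ ≤ 1 / 2 ^ k := one_div_pow_le_one_div_pow_of_le one_le_two hk
    _ = 2 ^ (-(k : ℤ)) := by rw [zpow_neg, zpow_natCast, one_div]

end Rat

theorem Nat.size_pair_le (a b : ℕ) : (Nat.pair a b).size ≤ 2 * max a.size b.size := by
  set s := max a.size b.size
  have ha : a < 2 ^ s :=
    (Nat.lt_size_self a).trans_le (Nat.pow_le_pow_right two_pos (le_max_left ..))
  have hb : b < 2 ^ s :=
    (Nat.lt_size_self b).trans_le (Nat.pow_le_pow_right two_pos (le_max_right ..))
  rw [Nat.size_le]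
  calc Nat.pair a b < (max a b + 1) ^ 2 := Nat.pair_lt_max_add_one_sq a b
    _ ≤ (2 ^ s) ^ 2 := Nat.pow_le_pow_left (max_lt ha hb) 2
    _ = 2 ^ (2 * s) := by rw [← pow_mul, mul_comm]

theorem Nat.size_four_mul_add_le (n : ℕ) {r : ℕ} (hr : r ≤ 7) :
    (4 * n + r).size ≤ n.size + 3 := by
  have hn := Nat.lt_size_self n
  have hpos := Nat.one_le_two_pow (n := n.size)
  rw [Nat.size_le, pow_add]
  omega

theorem Nat.sixteen_mul_le_two_pow {t : ℕ} (ht : 8 ≤ t) : 16 * t ≤ 2 ^ t := by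
  induction t, ht using Nat.le_induction with
  | base => norm_num
  | succ t _ ih => rw [pow_succ]; omega

theorem codeLen_pair_le (f g : Code) :
    codeLen (f.pair g) ≤ 2 * max (codeLen f) (codeLen g) + 3 := by
  have : encode (f.pair g) = 4 * Nat.pair (encode f) (encode g) + 4 := by
    simp only [Code.encodeCode_eq, Code.encodeCode]
    ring
  rw [codeLen, this]
  exact (Nat.size_four_mul_add_le _ (by norm_num)).trans (by grw [Nat.size_pair_le]; rfl)

theorem codeLen_comp_le (f g : Code) :
    codeLen (f.comp g) ≤ 2 * max (codeLen f) (codeLen g) + 3 := by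
  have : encode (f.comp g) = 4 * Nat.pair (encode f) (encode g) + 6 := by
    simp only [Code.encodeCode_eq, Code.encodeCode]
    ring
  rw [codeLen, this]
  exact (Nat.size_four_mul_add_le _ (by norm_num)).trans (by grw [Nat.size_pair_le]; rfl)

theorem C_le_codeLen {e : Code} {y : ℕ} (h : Outputs e y) : C y ≤ codeLen e :=
  Nat.sInf_le ⟨e, h, rfl⟩

theorem Outputs.comp {f g : Code} {n y : ℕ} (hg : Outputs g n) (hf : f.eval n = Part.some y) :
    Outputs (f.comp g) y := by
  change g.eval 0 >>= f.eval = _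
  rw [show g.eval 0 = _ from hg]
  exact (Part.bind_some n _).trans hf

def doublingCode : ℕ → Code
  | 0 => .succ
  | j + 1 => .pair (doublingCode j) (doublingCode j)

theorem outputs_doublingCode (j : ℕ) : Outputs (doublingCode j) (2 ^ 2 ^ j - 1) := by
  induction j with
  | zero => rfl
  | succ j ih =>
    obtain ⟨u, hu⟩ : ∃ u, 2 ^ 2 ^ j = u + 1 := ⟨_, (Nat.succ_pred_eq_of_pos (by positivity)).symm⟩
    have hsq : 2 ^ 2 ^ (j + 1) - 1 = Nat.pair u u := by
      rw [pow_succ, pow_mul, hu, Nat.pair, if_neg (lt_irrefl u)]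
      ring_nf
      omega
    rw [Outputs] at ih ⊢
    rw [hu, Nat.add_sub_cancel] at ih
    simp [doublingCode, Code.eval, ih, hsq, Seq.seq]

theorem codeLen_doublingCode_add_three_le (j : ℕ) : codeLen (doublingCode j) + 3 ≤ 4 * 2 ^ j := by
  induction j with
  | zero => decide
  | succ j ih =>
    have := codeLen_pair_le (doublingCode j) (doublingCode j)
    rw [max_self] at this
    rw [pow_succ]
    simp only [doublingCode]
    omega

theorem exists_outputs_codeLen_comp_add_lt (F : Code) (B : ℕ) :
    ∃ K n, Outputs K n ∧ codeLen (F.comp K) + B < n := by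
  set j := codeLen F + B + 8
  have hj : j < 2 ^ j := Nat.lt_two_pow_self
  refine ⟨doublingCode j, 2 ^ 2 ^ j - 1, outputs_doublingCode j, ?_⟩
  -- with `t = 2 ^ j ≥ max (codeLen F) B`: `codeLen (F.comp K) ≤ 8 * t - 3` and `16 * t ≤ 2 ^ t`
  have hK := codeLen_doublingCode_add_three_le j
  have hcomp := codeLen_comp_le F (doublingCode j)
  have hgrowth := Nat.sixteen_mul_le_two_pow (t := 2 ^ j) (by omega)
  omega

theorem assembly_index_deceived_in_universal_space_general
    (c : ℕ → ℕ) (hc : Computable c)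
    (P : ℕ → ℚ) (hP : Computable P)
    (hsmall : ∀ N : ℕ, ∀ ε : ℚ, 0 < ε → ∃ x : ℕ, N ≤ c x ∧ P x < ε)
    (E m : ℕ) :
    ∃ y : ℕ, C y + E < c y ∧ (P y : ℝ) < (2 : ℝ) ^ (-((C y + m : ℕ) : ℤ)) := by
  have hex (n : ℕ) : ∃ y, n ≤ c y ∧ P y * 2 ^ n < 1 := by
    obtain ⟨y, hcy, hPy⟩ := hsmall n (1 / 2 ^ n) (by positivity)
    exact ⟨y, hcy, (lt_div_iff₀ (by positivity)).1 hPy⟩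
  have htest : ComputablePred fun ny : ℕ × ℕ => ny.1 ≤ c ny.2 ∧ P ny.2 * 2 ^ ny.1 < 1 :=
    (Primrec.nat_le.decide.to_comp.comp .fst (hc.comp .snd)).computablePred.and
      (Rat.computablePred_mul_two_pow_lt_one.decide.comp ((hP.comp .snd).pair .fst)).computablePred
  obtain ⟨F, hF⟩ := Code.exists_code.1 (Partrec.nat_iff.1 (Computable.find htest hex).partrec)
  obtain ⟨K, n, hK, hlen⟩ := exists_outputs_codeLen_comp_add_lt F (E + m)
  obtain ⟨hcy, hPy⟩ := Nat.find_spec (hex n)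
  have hC : C (Nat.find (hex n)) ≤ codeLen (F.comp K) :=
    C_le_codeLen (hK.comp (by rw [hF]; rfl))
  exact ⟨Nat.find (hex n), by omega, Rat.cast_lt_two_zpow_neg_of_mul_two_pow_lt_one hPy (by omega)⟩

/-- Corollary 2.5: for a computable assembly index `c` with unbounded range and a computable
pathway-probability bound `P` jointly small along high-index objects (generative processes
capable of universal computation), for all `E, m` there is an object `y` with
`C y + E < c y` and `P y < 2^(-(C y + m))`. -/
theorem assembly_index_deceived_in_universal_space
    (c : ℕ → ℕ) (hc : Computable c) (hub : ∀ N : ℕ, ∃ x : ℕ, N ≤ c x)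
    (P : ℕ → ℚ) (hP : Computable P) (hP01 : ∀ y : ℕ, 0 ≤ P y ∧ P y ≤ 1)
    (hsmall : ∀ N : ℕ, ∀ ε : ℚ, 0 < ε → ∃ x : ℕ, N ≤ c x ∧ P x < ε)
    (E m : ℕ) :
    ∃ y : ℕ, C y + E < c y ∧ (P y : ℝ) < (2 : ℝ) ^ (-((C y + m : ℕ) : ℤ)) :=
  assembly_index_deceived_in_universal_space_general c hc P hP hsmall E m
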